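/- Let H be a unital associative counital coassociative bialgebra. If the map T₁ : H ⊗ H → H ⊗ H, T₁(x ⊗ y) = Δ(x)(1 ⊗ y), is bijective and its inverse T₁⁻¹ is both a right H-module map and a left H-comodule map, then H admits an antipode, i.e., H is a Hopf algebra. Moreover the antipode is given by S(a) = (ε ⊗ id)(T₁⁻¹(a ⊗ 1)). -/
import Mathlib

set_option synthInstance.maxHeartbeats 1000000
set_option maxHeartbeats 1000000

open TensorProduct

variable (k H : Type*) [Field k] [Ring H] [Bialgebra k H]

/-- `T₁ : H ⊗ H → H ⊗ H`, `T₁(x ⊗ y) = Δ(x)(1 ⊗ y) = Σ x₍₁₎ ⊗ x₍₂₎y`. -/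
noncomputable def T₁ : H ⊗[k] H →ₗ[k] H ⊗[k] H :=
  (LinearMap.mul' k H).lTensor H ∘ₗ (TensorProduct.assoc k H H H).toLinearMap ∘ₗ
    (Coalgebra.comul (R := k) (A := H)).rTensor H

/-- The left `H`-comodule structure on `H ⊗ H`: `ρˡ(x ⊗ y) = Σ x₍₁₎ ⊗ (x₍₂₎ ⊗ y)`. -/
noncomputable def ρl : H ⊗[k] H →ₗ[k] H ⊗[k] (H ⊗[k] H) :=
  (TensorProduct.assoc k H H H).toLinearMap ∘ₗ (Coalgebra.comul (R := k) (A := H)).rTensor H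

/-- `E(x ⊗ y) = ε(x) y`. -/
noncomputable def Emap : H ⊗[k] H →ₗ[k] H :=
  (TensorProduct.lid k H).toLinearMap ∘ₗ (Coalgebra.counit (R := k) (A := H)).rTensor H

lemma Emap_tmul (x y : H) :
    Emap k H (x ⊗ₜ[k] y) = Coalgebra.counit (R := k) x • y := by
  simp [Emap]

lemma T₁_tmul (x y : H) : T₁ k H (x ⊗ₜ[k] y) =
    (LinearMap.mul' k H).lTensor H
      ((TensorProduct.assoc k H H H) (Coalgebra.comul x ⊗ₜ[k] y)) := by
  simp [T₁]

lemma ρl_tmul (x y : H) : ρl k H (x ⊗ₜ[k] y) =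
    (TensorProduct.assoc k H H H) (Coalgebra.comul x ⊗ₜ[k] y) := by
  simp [ρl]

lemma T₁_tmul_one (a : H) : T₁ k H (a ⊗ₜ[k] 1) = Coalgebra.comul a := by
  rw [T₁_tmul]
  generalize Coalgebra.comul (R := k) a = c
  induction c using TensorProduct.induction_on with
  | zero => simp only [zero_tmul, LinearEquiv.map_zero, map_zero]
  | tmul p q => simp
  | add u v hu hv => simp [add_tmul, hu, hv]

lemma Emap_T₁ (z : H ⊗[k] H) : Emap k H (T₁ k H z) = LinearMap.mul' k H z := by
  induction z using TensorProduct.induction_on with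
  | zero => simp
  | tmul x y =>
    rw [T₁_tmul]
    have key : ∀ c : H ⊗[k] H,
        Emap k H ((LinearMap.mul' k H).lTensor H
          ((TensorProduct.assoc k H H H) (c ⊗ₜ[k] y))) = Emap k H c * y := by
      intro c
      induction c using TensorProduct.induction_on with
      | zero => simp only [zero_tmul, LinearEquiv.map_zero, map_zero, zero_mul]
      | tmul p q => simp [Emap_tmul, smul_mul_assoc, mul_assoc]
      | add u v hu hv => simp [add_tmul, hu, hv, add_mul]
    rw [key]
    have : Emap k H (Coalgebra.comul x) = x := by
      simp [Emap, Coalgebra.rTensor_counit_comul]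
    rw [this, LinearMap.mul'_apply]
  | add u v hu hv => simp [hu, hv]

/-- Let `H` be a bialgebra. If `T₁(x ⊗ y) = Δ(x)(1 ⊗ y)` has a (linear) inverse
`T₁⁻¹` which is a right `H`-module map (for `(x ⊗ y)·a = x ⊗ ya`) and a left `H`-comodule map
(for `ρˡ(x ⊗ y) = Σ x₍₁₎ ⊗ (x₍₂₎ ⊗ y)`), then `H` admits an antipode, i.e. `H` is a Hopf
algebra, and the antipode is given by `S(a) = (ε ⊗ id)(T₁⁻¹(a ⊗ 1))`. -/
theorem bialgebra_isHopf_of_T₁_invertible (T₁inv : H ⊗[k] H →ₗ[k] H ⊗[k] H)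
    (h1 : T₁ k H ∘ₗ T₁inv = LinearMap.id) (h2 : T₁inv ∘ₗ T₁ k H = LinearMap.id)
    (hmod : ∀ a : H,
      T₁inv ∘ₗ (LinearMap.mulRight k a).lTensor H =
        (LinearMap.mulRight k a).lTensor H ∘ₗ T₁inv)
    (hcomod : ρl k H ∘ₗ T₁inv = T₁inv.lTensor H ∘ₗ ρl k H) :
    ∃ S : H →ₗ[k] H,
      (LinearMap.mul' k H ∘ₗ S.rTensor H ∘ₗ Coalgebra.comul =
          Algebra.linearMap k H ∘ₗ Coalgebra.counit) ∧
      (LinearMap.mul' k H ∘ₗ S.lTensor H ∘ₗ Coalgebra.comul =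
          Algebra.linearMap k H ∘ₗ Coalgebra.counit) ∧
      (∀ a : H,
        S a = TensorProduct.lid k H
          ((Coalgebra.counit (R := k) (A := H)).rTensor H (T₁inv (a ⊗ₜ[k] 1)))) := by
  set S : H →ₗ[k] H := Emap k H ∘ₗ T₁inv ∘ₗ (TensorProduct.mk k H H).flip 1 with hSdef
  have hS : ∀ a : H, S a = Emap k H (T₁inv (a ⊗ₜ[k] 1)) := fun a => rfl
  -- module property pointwise
  have hmod' : ∀ (x a : H), T₁inv (x ⊗ₜ[k] a) =
      (LinearMap.mulRight k a).lTensor H (T₁inv (x ⊗ₜ[k] 1)) := by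
    intro x a
    have := LinearMap.congr_fun (hmod a) (x ⊗ₜ[k] 1)
    simpa using this
  have hEmul : ∀ (a : H) (z : H ⊗[k] H),
      Emap k H ((LinearMap.mulRight k a).lTensor H z) = Emap k H z * a := by
    intro a z
    induction z using TensorProduct.induction_on with
    | zero => simp
    | tmul p q => simp [Emap_tmul, smul_mul_assoc]
    | add u v hu hv => simp [hu, hv, add_mul]
  -- mul' ∘ S.rTensor = Emap ∘ T₁inv
  have step1 : ∀ c : H ⊗[k] H,
      LinearMap.mul' k H (S.rTensor H c) = Emap k H (T₁inv c) := by
    intro c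
    induction c using TensorProduct.induction_on with
    | zero => simp
    | tmul x y => rw [hmod', hEmul]; simp [hS]
    | add u v hu hv => simp [hu, hv]
  -- T₁inv (comul a) = a ⊗ 1
  have hinvcomul : ∀ a : H, T₁inv (Coalgebra.comul a) = a ⊗ₜ[k] 1 := by
    intro a
    have := LinearMap.congr_fun h2 (a ⊗ₜ[k] (1 : H))
    simpa [T₁_tmul_one] using this
  refine ⟨S, ?_, ?_, fun a => ?_⟩
  · ext a
    simp only [LinearMap.comp_apply]
    rw [step1, hinvcomul, Emap_tmul]
    simp [Algebra.algebraMap_eq_smul_one]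
  · -- second antipode identity
    have hGρ : ∀ z : H ⊗[k] H,
        LinearMap.mul' k H ((Emap k H).lTensor H (ρl k H z)) = LinearMap.mul' k H z := by
      intro z
      induction z using TensorProduct.induction_on with
      | zero => simp
      | tmul p q =>
        rw [ρl_tmul]
        have key : ∀ c : H ⊗[k] H,
            LinearMap.mul' k H ((Emap k H).lTensor H
              ((TensorProduct.assoc k H H H) (c ⊗ₜ[k] q))) =
            (TensorProduct.rid k H) ((Coalgebra.counit (R := k)).lTensor H c) * q := by
          intro c
          induction c using TensorProduct.induction_on with
          | zero => simp only [zero_tmul, LinearEquiv.map_zero, map_zero, zero_mul]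
          | tmul u v => simp [Emap_tmul, mul_smul_comm, smul_mul_assoc]
          | add u v hu hv => simp [add_tmul, hu, hv, add_mul]
        rw [key, Coalgebra.lTensor_counit_comul]
        simp
      | add u v hu hv => simp [hu, hv]
    have hGlemma : ∀ c : H ⊗[k] H,
        LinearMap.mul' k H ((Emap k H).lTensor H (T₁inv.lTensor H
          ((TensorProduct.assoc k H H H) (c ⊗ₜ[k] 1)))) =
        LinearMap.mul' k H (S.lTensor H c) := by
      intro c
      induction c using TensorProduct.induction_on with
      | zero => simp only [zero_tmul, LinearEquiv.map_zero, map_zero]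
      | tmul p q => simp [hS]
      | add u v hu hv => simp [add_tmul, hu, hv]
    have hmulu : ∀ a : H, LinearMap.mul' k H (T₁inv (a ⊗ₜ[k] 1)) =
        Coalgebra.counit (R := k) a • (1 : H) := by
      intro a
      have h1a : T₁ k H (T₁inv (a ⊗ₜ[k] 1)) = a ⊗ₜ[k] 1 := by
        have := LinearMap.congr_fun h1 (a ⊗ₜ[k] (1 : H))
        simpa using this
      rw [← Emap_T₁, h1a, Emap_tmul]
    ext a
    simp only [LinearMap.comp_apply]
    rw [← hGlemma (Coalgebra.comul a), ← ρl_tmul]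
    have hc := LinearMap.congr_fun hcomod (a ⊗ₜ[k] (1 : H))
    simp only [LinearMap.comp_apply] at hc
    rw [← hc, hGρ, hmulu]
    simp [Algebra.algebraMap_eq_smul_one]
  · rw [hS]
    simp [Emap]
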